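/- arXiv:math/0402105 — 2 statements merged into one kernel-verified Lean document; each statement's English description precedes it below -/
import Mathlib

section
/- The spectrum of the matrix J² (the set of its eigenvalues in ℂ) equals { j² + j : j ∈ 𝒥_n }. -/
open Matrix Complex

/-- Spin-1/2 Pauli matrix σ_x. -/
noncomputable def pauliX : Matrix (Fin 2) (Fin 2) ℂ := (1/2 : ℂ) • !![0, 1; 1, 0]

/-- Spin-1/2 Pauli matrix σ_y. -/
noncomputable def pauliY : Matrix (Fin 2) (Fin 2) ℂ :=
  (1/2 : ℂ) • !![0, -Complex.I; Complex.I, 0]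

/-- Spin-1/2 Pauli matrix σ_z. -/
noncomputable def pauliZ : Matrix (Fin 2) (Fin 2) ℂ := (1/2 : ℂ) • !![1, 0; 0, -1]

/-- The operator `1⊗⋯⊗1⊗σ⊗1⊗⋯⊗1` acting as `σ` in the `k`-th tensor slot of
`(ℂ²)^{⊗n}` and as the identity elsewhere, written as a matrix indexed by the
standard tensor-product basis `Fin n → Fin 2`. -/
noncomputable def slot (n : ℕ) (σ : Matrix (Fin 2) (Fin 2) ℂ) (k : Fin n) :
    Matrix (Fin n → Fin 2) (Fin n → Fin 2) ℂ :=
  Matrix.of fun i j => σ (i k) (j k) * ∏ l ∈ Finset.univ.erase k, (if i l = j l then (1:ℂ) else 0)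

/-- Collective rotation generator `J_x = Σ_k J_x^{(k)}`. -/
noncomputable def Jx (n : ℕ) : Matrix (Fin n → Fin 2) (Fin n → Fin 2) ℂ :=
  ∑ k : Fin n, slot n pauliX k

/-- Collective rotation generator `J_y = Σ_k J_y^{(k)}`. -/
noncomputable def Jy (n : ℕ) : Matrix (Fin n → Fin 2) (Fin n → Fin 2) ℂ :=
  ∑ k : Fin n, slot n pauliY k

/-- Collective rotation generator `J_z = Σ_k J_z^{(k)}`. -/
noncomputable def Jz (n : ℕ) : Matrix (Fin n → Fin 2) (Fin n → Fin 2) ℂ :=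
  ∑ k : Fin n, slot n pauliZ k

/-- `J_+ = J_x + i J_y`. -/
noncomputable def Jp (n : ℕ) : Matrix (Fin n → Fin 2) (Fin n → Fin 2) ℂ :=
  Jx n + Complex.I • Jy n

/-- `J_- = J_x - i J_y`. -/
noncomputable def Jm (n : ℕ) : Matrix (Fin n → Fin 2) (Fin n → Fin 2) ℂ :=
  Jx n - Complex.I • Jy n

/-- The J-total operator `J² = J_x² + J_y² + J_z²`. -/
noncomputable def Jsq (n : ℕ) : Matrix (Fin n → Fin 2) (Fin n → Fin 2) ℂ :=
  Jx n ^ 2 + Jy n ^ 2 + Jz n ^ 2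

/-- The index set `𝒥_n`: `{0, 1, …, n/2}` if `n` is even and `{1/2, 3/2, …, n/2}` if `n` is
odd; equivalently, the set of `j = m/2` with `m` a natural number, `m ≤ n`, and `m ≡ n (mod 2)`. -/
def Jset (n : ℕ) : Set ℝ := {j : ℝ | ∃ m : ℕ, m ≤ n ∧ m % 2 = n % 2 ∧ j = (m : ℝ) / 2}

lemma sum_eq_update {n : ℕ} (i : Fin n → Fin 2) (k : Fin n) (F : (Fin n → Fin 2) → ℂ)
    (hF : ∀ h : Fin n → Fin 2, ∀ l, l ≠ k → h l ≠ i l → F h = 0) :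
    ∑ h : Fin n → Fin 2, F h = F (Function.update i k 0) + F (Function.update i k 1) := by
  have h01 : Function.update i k 0 ≠ Function.update i k 1 := by
    intro h
    have := congrFun h k
    simp [Function.update_self] at this
  rw [← Finset.sum_pair h01]
  symm
  apply Finset.sum_subset (Finset.subset_univ _)
  intro h _ hh
  simp only [Finset.mem_insert, Finset.mem_singleton] at hh
  push_neg at hh
  by_cases hc : ∀ l, l ≠ k → h l = i l
  · exfalso
    have he : h = Function.update i k (h k) := by
      funext l
      by_cases hl : l = k
      · subst hl; simp [Function.update_self]
      · rw [Function.update_of_ne hl]; exact hc l hl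
    rcases Fin.exists_fin_two.mp ⟨h k, rfl⟩ with _ | _
    all_goals {
      have : h k = 0 ∨ h k = 1 := by omega
      rcases this with h0 | h0 <;> rw [h0] at he
      · exact hh.1 he
      · exact hh.2 he }
  · push_neg at hc
    obtain ⟨l, hl, hne⟩ := hc
    exact hF h l hl hne

lemma prod_delta_eq_zero {n : ℕ} {S : Finset (Fin n)} {i j : Fin n → Fin 2}
    {l : Fin n} (hl : l ∈ S) (hne : i l ≠ j l) :
    (∏ l ∈ S, (if i l = j l then (1:ℂ) else 0)) = 0 :=
  Finset.prod_eq_zero hl (by simp [hne])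

lemma prod_delta_eq_one {n : ℕ} {S : Finset (Fin n)} {i j : Fin n → Fin 2}
    (h : ∀ l ∈ S, i l = j l) :
    (∏ l ∈ S, (if i l = j l then (1:ℂ) else 0)) = 1 :=
  Finset.prod_eq_one (fun l hl => by simp [h l hl])

lemma slot_mulVec {n : ℕ} (σ : Matrix (Fin 2) (Fin 2) ℂ) (k : Fin n)
    (u : (Fin n → Fin 2) → ℂ) (i : Fin n → Fin 2) :
    (slot n σ k *ᵥ u) i
      = σ (i k) 0 * u (Function.update i k 0) + σ (i k) 1 * u (Function.update i k 1) := by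
  have key : ∀ a : Fin 2,
      slot n σ k i (Function.update i k a) * u (Function.update i k a)
        = σ (i k) a * u (Function.update i k a) := by
    intro a
    simp only [slot, Matrix.of_apply, Function.update_self]
    rw [prod_delta_eq_one (fun l hl => by
      rw [Function.update_of_ne (Finset.ne_of_mem_erase hl)])]
    ring
  simp only [Matrix.mulVec, dotProduct]
  rw [sum_eq_update i k _ (fun h l hl hne => by
    simp only [slot, Matrix.of_apply]
    rw [prod_delta_eq_zero (Finset.mem_erase.mpr ⟨hl, Finset.mem_univ l⟩) (Ne.symm hne)]
    ring)]
  rw [key 0, key 1]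

lemma slot_mul_same {n : ℕ} (σ τ : Matrix (Fin 2) (Fin 2) ℂ) (k : Fin n) :
    slot n σ k * slot n τ k = slot n (σ * τ) k := by
  ext i j
  rw [Matrix.mul_apply]
  rw [sum_eq_update i k _ (fun h l hl hne => by
    simp only [slot, Matrix.of_apply]
    rw [prod_delta_eq_zero (Finset.mem_erase.mpr ⟨hl, Finset.mem_univ l⟩) (Ne.symm hne)]
    ring)]
  have key : ∀ a : Fin 2,
      slot n σ k i (Function.update i k a) * slot n τ k (Function.update i k a) j
        = σ (i k) a * τ a (j k)
            * ∏ l ∈ Finset.univ.erase k, (if i l = j l then (1:ℂ) else 0) := by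
    intro a
    simp only [slot, Matrix.of_apply, Function.update_self]
    rw [prod_delta_eq_one (fun l hl => by
      rw [Function.update_of_ne (Finset.ne_of_mem_erase hl)])]
    have : (∏ l ∈ Finset.univ.erase k,
        (if Function.update i k a l = j l then (1:ℂ) else 0))
        = ∏ l ∈ Finset.univ.erase k, (if i l = j l then (1:ℂ) else 0) := by
      apply Finset.prod_congr rfl
      intro l hl
      rw [Function.update_of_ne (Finset.ne_of_mem_erase hl)]
    rw [this]; ring
  rw [key 0, key 1, slot]
  simp only [Matrix.of_apply, Matrix.mul_apply, Fin.sum_univ_two]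
  ring

lemma slot_mul_ne {n : ℕ} (σ τ : Matrix (Fin 2) (Fin 2) ℂ) {k l : Fin n} (hkl : k ≠ l) :
    slot n σ k * slot n τ l
      = Matrix.of fun i j => σ (i k) (j k) * τ (i l) (j l)
          * ∏ m ∈ (Finset.univ.erase k).erase l, (if i m = j m then (1:ℂ) else 0) := by
  ext i j
  rw [Matrix.mul_apply]
  rw [sum_eq_update i k _ (fun h m hm hne => by
    simp only [slot, Matrix.of_apply]
    rw [prod_delta_eq_zero (Finset.mem_erase.mpr ⟨hm, Finset.mem_univ m⟩) (Ne.symm hne)]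
    ring)]
  have key : ∀ a : Fin 2,
      slot n σ k i (Function.update i k a) * slot n τ l (Function.update i k a) j
        = σ (i k) a * τ (i l) (j l) * (if a = j k then (1:ℂ) else 0)
            * ∏ m ∈ (Finset.univ.erase l).erase k, (if i m = j m then (1:ℂ) else 0) := by
    intro a
    simp only [slot, Matrix.of_apply, Function.update_self]
    rw [prod_delta_eq_one (fun m hm => by
      rw [Function.update_of_ne (Finset.ne_of_mem_erase hm)])]
    rw [Function.update_of_ne (Ne.symm hkl)]
    have hk_mem : k ∈ Finset.univ.erase l := Finset.mem_erase.mpr ⟨hkl, Finset.mem_univ k⟩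
    rw [← Finset.mul_prod_erase _ _ hk_mem, Function.update_self]
    have : (∏ m ∈ (Finset.univ.erase l).erase k,
        (if Function.update i k a m = j m then (1:ℂ) else 0))
        = ∏ m ∈ (Finset.univ.erase l).erase k, (if i m = j m then (1:ℂ) else 0) := by
      apply Finset.prod_congr rfl
      intro m hm
      rw [Function.update_of_ne (Finset.ne_of_mem_erase hm)]
    rw [this]; ring
  rw [key 0, key 1]
  rw [Finset.erase_right_comm]
  simp only [Matrix.of_apply]
  by_cases h0 : j k = 0
  · simp [h0]
  · have h1 : j k = 1 := by omega
    simp [h1]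

lemma slot_comm {n : ℕ} (σ τ : Matrix (Fin 2) (Fin 2) ℂ) {k l : Fin n} (hkl : k ≠ l) :
    slot n σ k * slot n τ l = slot n τ l * slot n σ k := by
  rw [slot_mul_ne σ τ hkl, slot_mul_ne τ σ (Ne.symm hkl)]
  ext i j
  simp only [Matrix.of_apply]
  rw [Finset.erase_right_comm]
  ring

lemma slot_add {n : ℕ} (σ τ : Matrix (Fin 2) (Fin 2) ℂ) (k : Fin n) :
    slot n (σ + τ) k = slot n σ k + slot n τ k := by
  ext i j; simp [slot, add_mul]

lemma slot_sub {n : ℕ} (σ τ : Matrix (Fin 2) (Fin 2) ℂ) (k : Fin n) :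
    slot n (σ - τ) k = slot n σ k - slot n τ k := by
  ext i j; simp [slot, sub_mul]

lemma slot_smul {n : ℕ} (c : ℂ) (σ : Matrix (Fin 2) (Fin 2) ℂ) (k : Fin n) :
    slot n (c • σ) k = c • slot n σ k := by
  ext i j; simp [slot, mul_assoc]

lemma slot_conjTranspose {n : ℕ} (σ : Matrix (Fin 2) (Fin 2) ℂ) (k : Fin n) :
    (slot n σ k)ᴴ = slot n σᴴ k := by
  ext i j
  have hstar : star (∏ l ∈ Finset.univ.erase k, (if j l = i l then (1:ℂ) else 0))
      = ∏ l ∈ Finset.univ.erase k, (if i l = j l then (1:ℂ) else 0) := by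
    by_cases hc : ∀ l ∈ Finset.univ.erase k, i l = j l
    · rw [prod_delta_eq_one (fun l hl => (hc l hl).symm), prod_delta_eq_one hc, star_one]
    · push_neg at hc
      obtain ⟨l, hl, hne⟩ := hc
      rw [prod_delta_eq_zero hl (Ne.symm hne), prod_delta_eq_zero hl hne, star_zero]
  simp only [slot, Matrix.of_apply, Matrix.conjTranspose_apply, star_mul', hstar]

/-- The collective commutator lemma. -/
lemma sumslot_comm {n : ℕ} (σ τ : Matrix (Fin 2) (Fin 2) ℂ) :
    (∑ k : Fin n, slot n σ k) * (∑ k : Fin n, slot n τ k)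
      - (∑ k : Fin n, slot n τ k) * (∑ k : Fin n, slot n σ k)
      = ∑ k : Fin n, slot n (σ * τ - τ * σ) k := by
  have h1 : (∑ k : Fin n, slot n σ k) * (∑ k : Fin n, slot n τ k)
      = ∑ k : Fin n, ∑ l : Fin n, slot n σ k * slot n τ l := Finset.sum_mul_sum _ _ _ _
  have h2 : (∑ k : Fin n, slot n τ k) * (∑ k : Fin n, slot n σ k)
      = ∑ k : Fin n, ∑ l : Fin n, slot n τ l * slot n σ k := by
    rw [Finset.sum_mul_sum]
    exact Finset.sum_comm
  rw [h1, h2, ← Finset.sum_sub_distrib]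
  apply Finset.sum_congr rfl
  intro k _
  rw [← Finset.sum_sub_distrib]
  rw [Finset.sum_eq_single k]
  · rw [slot_mul_same, slot_mul_same, ← slot_sub]
  · intro l _ hlk
    rw [slot_comm σ τ (Ne.symm hlk), sub_self]
  · intro h; exact absurd (Finset.mem_univ k) h

lemma pauli_comm_xy : pauliX * pauliY - pauliY * pauliX = Complex.I • pauliZ := by
  ext i j
  fin_cases i <;> fin_cases j <;>
    norm_num [pauliX, pauliY, pauliZ, Matrix.mul_apply, Fin.sum_univ_two] <;>
    (first | ring1 | linear_combination (1/2:ℂ) * Complex.I_mul_I |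
      linear_combination (-1/2:ℂ) * Complex.I_mul_I | linear_combination Complex.I_mul_I |
      linear_combination (-1:ℂ) * Complex.I_mul_I)

lemma pauli_comm_yz : pauliY * pauliZ - pauliZ * pauliY = Complex.I • pauliX := by
  ext i j
  fin_cases i <;> fin_cases j <;>
    norm_num [pauliX, pauliY, pauliZ, Matrix.mul_apply, Fin.sum_univ_two] <;>
    (first | ring1 | linear_combination (1/2:ℂ) * Complex.I_mul_I |
      linear_combination (-1/2:ℂ) * Complex.I_mul_I | linear_combination Complex.I_mul_I |
      linear_combination (-1:ℂ) * Complex.I_mul_I)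

lemma pauli_comm_zx : pauliZ * pauliX - pauliX * pauliZ = Complex.I • pauliY := by
  ext i j
  fin_cases i <;> fin_cases j <;>
    norm_num [pauliX, pauliY, pauliZ, Matrix.mul_apply, Fin.sum_univ_two] <;>
    (first | ring1 | linear_combination (1/2:ℂ) * Complex.I_mul_I |
      linear_combination (-1/2:ℂ) * Complex.I_mul_I | linear_combination Complex.I_mul_I |
      linear_combination (-1:ℂ) * Complex.I_mul_I)

lemma comm_xy (n : ℕ) : Jx n * Jy n - Jy n * Jx n = Complex.I • Jz n := by
  rw [Jx, Jy, Jz, sumslot_comm, Finset.smul_sum]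
  apply Finset.sum_congr rfl
  intro k _
  rw [pauli_comm_xy, slot_smul]

lemma comm_yz (n : ℕ) : Jy n * Jz n - Jz n * Jy n = Complex.I • Jx n := by
  rw [Jy, Jz, Jx, sumslot_comm, Finset.smul_sum]
  apply Finset.sum_congr rfl
  intro k _
  rw [pauli_comm_yz, slot_smul]

lemma comm_zx (n : ℕ) : Jz n * Jx n - Jx n * Jz n = Complex.I • Jy n := by
  rw [Jz, Jx, Jy, sumslot_comm, Finset.smul_sum]
  apply Finset.sum_congr rfl
  intro k _
  rw [pauli_comm_zx, slot_smul]

lemma comm_sq {R : Type*} [Ring R] (a x c : R) (h : a * x - x * a = c) :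
    a ^ 2 * x - x * a ^ 2 = a * c + c * a := by
  rw [← h]; noncomm_ring

lemma jsq_comm_x (n : ℕ) : Jsq n * Jx n = Jx n * Jsq n := by
  have hy := comm_sq (Jy n) (Jx n) _ (by rw [show Jy n * Jx n - Jx n * Jy n
      = -(Complex.I • Jz n) from by rw [← comm_xy n]; abel])
  have hz := comm_sq (Jz n) (Jx n) _ (comm_zx n)
  have hx := comm_sq (Jx n) (Jx n) (0 : Matrix _ _ ℂ) (by rw [sub_self])
  have : Jsq n * Jx n - Jx n * Jsq n = 0 := by
    have expand : Jsq n * Jx n - Jx n * Jsq n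
        = (Jx n ^ 2 * Jx n - Jx n * Jx n ^ 2) + (Jy n ^ 2 * Jx n - Jx n * Jy n ^ 2)
          + (Jz n ^ 2 * Jx n - Jx n * Jz n ^ 2) := by
      rw [Jsq]; noncomm_ring
    rw [expand, hx, hy, hz]
    simp only [mul_neg, neg_mul, mul_smul_comm, smul_mul_assoc, mul_zero, zero_mul]
    abel
  linear_combination (norm := noncomm_ring) this

lemma jsq_comm_y (n : ℕ) : Jsq n * Jy n = Jy n * Jsq n := by
  have hx := comm_sq (Jx n) (Jy n) _ (comm_xy n)
  have hz := comm_sq (Jz n) (Jy n) _ (by rw [show Jz n * Jy n - Jy n * Jz n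
      = -(Complex.I • Jx n) from by rw [← comm_yz n]; abel])
  have hy := comm_sq (Jy n) (Jy n) (0 : Matrix _ _ ℂ) (by rw [sub_self])
  have : Jsq n * Jy n - Jy n * Jsq n = 0 := by
    have expand : Jsq n * Jy n - Jy n * Jsq n
        = (Jx n ^ 2 * Jy n - Jy n * Jx n ^ 2) + (Jy n ^ 2 * Jy n - Jy n * Jy n ^ 2)
          + (Jz n ^ 2 * Jy n - Jy n * Jz n ^ 2) := by
      rw [Jsq]; noncomm_ring
    rw [expand, hx, hy, hz]
    simp only [mul_neg, neg_mul, mul_smul_comm, smul_mul_assoc, mul_zero, zero_mul]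
    abel
  linear_combination (norm := noncomm_ring) this

lemma jsq_comm_p (n : ℕ) : Jsq n * Jp n = Jp n * Jsq n := by
  rw [Jp, mul_add, add_mul, jsq_comm_x, mul_smul_comm, smul_mul_assoc, jsq_comm_y]

lemma jsq_eq (n : ℕ) : Jsq n = Jz n ^ 2 + Jz n + Jm n * Jp n := by
  have hmp : Jm n * Jp n = Jx n ^ 2 + Jy n ^ 2 - Jz n := by
    have expand : Jm n * Jp n
        = Jx n ^ 2 + Complex.I • (Jx n * Jy n - Jy n * Jx n)
          - (Complex.I * Complex.I) • (Jy n * Jy n) := by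
      rw [Jm, Jp]
      simp only [mul_add, add_mul, sub_mul, mul_sub, smul_mul_assoc, mul_smul_comm, smul_smul,
        smul_sub, smul_add]
      noncomm_ring
    rw [expand, comm_xy, smul_smul, Complex.I_mul_I]
    simp only [neg_smul, one_smul, sub_neg_eq_add]
    noncomm_ring
  rw [hmp, Jsq]
  noncomm_ring

/-- Integer weight of a basis vector: number of `0`s minus number of `1`s. -/
def wt {n : ℕ} (i : Fin n → Fin 2) : ℤ := ∑ k : Fin n, (if i k = 0 then 1 else -1)

lemma wt_le {n : ℕ} (i : Fin n → Fin 2) : wt i ≤ n := by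
  calc wt i ≤ ∑ _k : Fin n, (1 : ℤ) := Finset.sum_le_sum (fun k _ => by split <;> omega)
  _ = n := by simp

lemma neg_le_wt {n : ℕ} (i : Fin n → Fin 2) : -(n : ℤ) ≤ wt i := by
  have : ∑ _k : Fin n, (-1 : ℤ) ≤ wt i := Finset.sum_le_sum (fun k _ => by split <;> omega)
  simpa using this

lemma wt_parity {n : ℕ} (i : Fin n → Fin 2) : (2 : ℤ) ∣ (wt i - n) := by
  have : wt i - n = ∑ k : Fin n, ((if i k = 0 then 1 else -1) - 1) := by
    rw [Finset.sum_sub_distrib, ← wt]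
    simp
  rw [this]
  apply Finset.dvd_sum
  intro k _
  split <;> omega

lemma Jz_diagonal (n : ℕ) : Jz n = Matrix.diagonal (fun i => (wt i : ℂ) / 2) := by
  ext i j
  rw [Jz]
  simp only [Matrix.sum_apply]
  by_cases hij : i = j
  · subst hij
    rw [Matrix.diagonal_apply_eq]
    have : ∀ k : Fin n, slot n pauliZ k i i = if i k = 0 then (1:ℂ)/2 else -(1/2) := by
      intro k
      simp only [slot, Matrix.of_apply, eq_self_iff_true, if_true, Finset.prod_const_one,
        mul_one]
      by_cases h : i k = 0
      · simp [h, pauliZ]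
      · have h1 : i k = 1 := by omega
        simp [h1, pauliZ]
    rw [Finset.sum_congr rfl (fun k _ => this k)]
    rw [wt]
    push_cast
    rw [Finset.sum_div]
    apply Finset.sum_congr rfl
    intro k _
    split <;> norm_num
  · rw [Matrix.diagonal_apply_ne _ hij]
    apply Finset.sum_eq_zero
    intro k _
    have : ∃ l, i l ≠ j l := by
      by_contra hc
      push_neg at hc
      exact hij (funext hc)
    obtain ⟨l, hl⟩ := this
    by_cases hlk : l = k
    · subst hlk
      simp only [slot, Matrix.of_apply]
      have : pauliZ (i l) (j l) = 0 := by
        have h0 : i l = 0 ∨ i l = 1 := by omega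
        have h1 : j l = 0 ∨ j l = 1 := by omega
        rcases h0 with h | h <;> rcases h1 with h' | h' <;>
          first
          | (exact absurd (h.trans h'.symm) hl)
          | (rw [h, h']; simp [pauliZ])
      rw [this, zero_mul]
    · simp only [slot, Matrix.of_apply]
      rw [prod_delta_eq_zero (Finset.mem_erase.mpr ⟨hlk, Finset.mem_univ l⟩) hl, mul_zero]

/-- The raising Pauli matrix. -/
noncomputable def sigmaP : Matrix (Fin 2) (Fin 2) ℂ := !![0, 1; 0, 0]

lemma Jp_eq_sumslot (n : ℕ) : Jp n = ∑ k : Fin n, slot n sigmaP k := by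
  have h2 : pauliX + Complex.I • pauliY = sigmaP := by
    ext i j
    fin_cases i <;> fin_cases j <;>
      norm_num [pauliX, pauliY, sigmaP] <;>
      (first | ring1 | linear_combination (1/2:ℂ) * Complex.I_mul_I |
        linear_combination (-1/2:ℂ) * Complex.I_mul_I)
  rw [Jp, Jx, Jy, Finset.smul_sum, ← Finset.sum_add_distrib]
  apply Finset.sum_congr rfl
  intro k _
  rw [← slot_smul, ← slot_add, h2]

lemma sigmaP_apply_ne_zero {a b : Fin 2} (h : sigmaP a b ≠ 0) : a = 0 ∧ b = 1 := by
  have h0 : a = 0 ∨ a = 1 := by omega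
  have h1 : b = 0 ∨ b = 1 := by omega
  rcases h0 with h' | h' <;> rcases h1 with h'' | h'' <;> subst h' <;> subst h'' <;>
    simp [sigmaP] at h ⊢

lemma Jp_apply_eq_zero {n : ℕ} {i j : Fin n → Fin 2} (h : wt i ≠ wt j + 2) :
    Jp n i j = 0 := by
  rw [Jp_eq_sumslot]
  simp only [Matrix.sum_apply]
  apply Finset.sum_eq_zero
  intro k _
  by_contra hne
  simp only [slot, Matrix.of_apply] at hne
  have hσ : sigmaP (i k) (j k) ≠ 0 := fun h0 => hne (by rw [h0, zero_mul])
  have hD : ∀ l, l ≠ k → i l = j l := by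
    intro l hl
    by_contra hc
    exact hne (by rw [prod_delta_eq_zero (Finset.mem_erase.mpr ⟨hl, Finset.mem_univ l⟩) hc,
      mul_zero])
  obtain ⟨hik, hjk⟩ := sigmaP_apply_ne_zero hσ
  apply h
  have : wt i - wt j = ∑ l : Fin n, ((if i l = 0 then (1:ℤ) else -1) - (if j l = 0 then 1 else -1)) := by
    rw [Finset.sum_sub_distrib, ← wt, ← wt]
  have hsum : ∑ l : Fin n, ((if i l = 0 then (1:ℤ) else -1) - (if j l = 0 then 1 else -1)) = 2 := by
    rw [Finset.sum_eq_single k]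
    · rw [hik, hjk]; norm_num
    · intro l _ hl
      rw [hD l hl]; ring
    · intro hk; exact absurd (Finset.mem_univ k) hk
  omega

lemma Jp_pow_apply_eq_zero {n : ℕ} (m : ℕ) {i j : Fin n → Fin 2}
    (h : wt i ≠ wt j + 2 * m) : (Jp n ^ m) i j = 0 := by
  induction m generalizing i j with
  | zero =>
    rw [pow_zero]
    have hij : i ≠ j := fun he => h (by rw [he]; ring)
    simp [Matrix.one_apply, hij]
  | succ m ih =>
    rw [pow_succ, Matrix.mul_apply]
    apply Finset.sum_eq_zero
    intro l _
    by_cases h1 : wt i ≠ wt l + 2 * m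
    · rw [ih h1, zero_mul]
    · push_neg at h1
      have h2 : wt l ≠ wt j + 2 := by omega
      rw [Jp_apply_eq_zero h2, mul_zero]

lemma Jp_pow_succ_eq_zero (n : ℕ) : Jp n ^ (n + 1) = 0 := by
  ext i j
  rw [Jp_pow_apply_eq_zero]
  · rfl
  · have h1 := wt_le i
    have h2 := neg_le_wt j
    omega

lemma mem_spectrum_iff_exists {N : Type*} [Fintype N] [DecidableEq N]
    (M : Matrix N N ℂ) (μ : ℂ) :
    μ ∈ spectrum ℂ M ↔ ∃ v, v ≠ 0 ∧ M *ᵥ v = μ • v := by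
  have hsub : ∀ v, (algebraMap ℂ (Matrix N N ℂ) μ - M) *ᵥ v = μ • v - M *ᵥ v := by
    intro v
    rw [Matrix.sub_mulVec]
    congr 1
    rw [Algebra.algebraMap_eq_smul_one, Matrix.smul_mulVec, Matrix.one_mulVec]
  rw [spectrum.mem_iff, Matrix.isUnit_iff_isUnit_det, isUnit_iff_ne_zero, not_not,
    ← Matrix.exists_mulVec_eq_zero_iff]
  constructor
  · rintro ⟨v, hv, hv0⟩
    refine ⟨v, hv, ?_⟩
    rw [hsub v] at hv0
    exact (sub_eq_zero.mp hv0).symm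
  · rintro ⟨v, hv, hv0⟩
    exact ⟨v, hv, by rw [hsub v, hv0, sub_self]⟩

lemma diagonal_eig {N : Type*} [Fintype N] [DecidableEq N] (d : N → ℂ) {μ : ℂ}
    {v : N → ℂ} (hv : v ≠ 0) (h : Matrix.diagonal d *ᵥ v = μ • v) :
    ∃ i, v i ≠ 0 ∧ d i = μ := by
  obtain ⟨i, hi⟩ := Function.ne_iff.mp hv
  refine ⟨i, hi, ?_⟩
  have := congrFun h i
  rw [Matrix.mulVec_diagonal] at this
  have h2 : μ • v i = μ * v i := rfl
  rw [Pi.smul_apply] at this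
  exact mul_right_cancel₀ hi (by rw [this, h2])

lemma pauliX_herm : pauliXᴴ = pauliX := by
  ext i j
  fin_cases i <;> fin_cases j <;> norm_num [pauliX, Matrix.conjTranspose_apply]

lemma pauliY_herm : pauliYᴴ = pauliY := by
  ext i j
  fin_cases i <;> fin_cases j <;>
    norm_num [pauliY, Matrix.conjTranspose_apply, Complex.ext_iff]

lemma pauliZ_herm : pauliZᴴ = pauliZ := by
  ext i j
  fin_cases i <;> fin_cases j <;> norm_num [pauliZ, Matrix.conjTranspose_apply]

lemma Jx_herm (n : ℕ) : (Jx n)ᴴ = Jx n := by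
  rw [Jx, Matrix.conjTranspose_sum]
  exact Finset.sum_congr rfl (fun k _ => by rw [slot_conjTranspose, pauliX_herm])

lemma Jy_herm (n : ℕ) : (Jy n)ᴴ = Jy n := by
  rw [Jy, Matrix.conjTranspose_sum]
  exact Finset.sum_congr rfl (fun k _ => by rw [slot_conjTranspose, pauliY_herm])

lemma Jz_herm (n : ℕ) : (Jz n)ᴴ = Jz n := by
  rw [Jz, Matrix.conjTranspose_sum]
  exact Finset.sum_congr rfl (fun k _ => by rw [slot_conjTranspose, pauliZ_herm])

lemma dot_sq_eq {N : Type*} [Fintype N] (A : Matrix N N ℂ) (hA : Aᴴ = A) (v : N → ℂ) :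
    star v ⬝ᵥ ((A * A) *ᵥ v) = star (A *ᵥ v) ⬝ᵥ (A *ᵥ v) := by
  rw [← Matrix.mulVec_mulVec, Matrix.star_mulVec, hA, Matrix.dotProduct_mulVec]

lemma dot_self_real {N : Type*} [Fintype N] (u : N → ℂ) :
    star u ⬝ᵥ u = ((∑ i, Complex.normSq (u i) : ℝ) : ℂ) := by
  rw [dotProduct]
  push_cast
  apply Finset.sum_congr rfl
  intro i _
  rw [Pi.star_apply, Complex.star_def, mul_comm, Complex.mul_conj]

lemma eig_real_nonneg (n : ℕ) {v : (Fin n → Fin 2) → ℂ} (hv : v ≠ 0) {c : ℝ}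
    (h : Jsq n *ᵥ v = (c : ℂ) • v) : 0 ≤ c := by
  classical
  have key : (c : ℂ) * (star v ⬝ᵥ v)
      = star (Jx n *ᵥ v) ⬝ᵥ (Jx n *ᵥ v) + star (Jy n *ᵥ v) ⬝ᵥ (Jy n *ᵥ v)
        + star (Jz n *ᵥ v) ⬝ᵥ (Jz n *ᵥ v) := by
    have : star v ⬝ᵥ (Jsq n *ᵥ v) = (c : ℂ) * (star v ⬝ᵥ v) := by
      rw [h, dotProduct_smul, smul_eq_mul]
    rw [← this, Jsq, sq, sq, sq]
    rw [Matrix.add_mulVec, Matrix.add_mulVec, dotProduct_add, dotProduct_add]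
    rw [dot_sq_eq _ (Jx_herm n), dot_sq_eq _ (Jy_herm n), dot_sq_eq _ (Jz_herm n)]
  rw [dot_self_real v, dot_self_real, dot_self_real, dot_self_real] at key
  set S := ∑ i, Complex.normSq (v i) with hS
  set T1 := ∑ i, Complex.normSq ((Jx n *ᵥ v) i)
  set T2 := ∑ i, Complex.normSq ((Jy n *ᵥ v) i)
  set T3 := ∑ i, Complex.normSq ((Jz n *ᵥ v) i)
  have hreal : c * S = T1 + T2 + T3 := by
    have := key
    push_cast at this
    exact_mod_cast this
  have hSpos : 0 < S := by
    obtain ⟨i, hi⟩ := Function.ne_iff.mp hv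
    apply Finset.sum_pos' (fun i _ => Complex.normSq_nonneg _)
    exact ⟨i, Finset.mem_univ i, Complex.normSq_pos.mpr hi⟩
  have h1 : 0 ≤ T1 := Finset.sum_nonneg (fun i _ => Complex.normSq_nonneg _)
  have h2 : 0 ≤ T2 := Finset.sum_nonneg (fun i _ => Complex.normSq_nonneg _)
  have h3 : 0 ≤ T3 := Finset.sum_nonneg (fun i _ => Complex.normSq_nonneg _)
  nlinarith

lemma jsq_spectrum_subset (n : ℕ) {μ : ℂ} (hμ : μ ∈ spectrum ℂ (Jsq n)) :
    ∃ m : ℕ, m ≤ n ∧ m % 2 = n % 2 ∧ μ = ((m : ℂ) / 2) ^ 2 + (m : ℂ) / 2 := by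
  classical
  obtain ⟨v, hv, hev⟩ := (mem_spectrum_iff_exists _ μ).mp hμ
  -- find the top of the ladder
  have hex : ∃ k : ℕ, Jp n ^ k *ᵥ v = 0 := by
    refine ⟨n + 1, ?_⟩
    rw [Jp_pow_succ_eq_zero, Matrix.zero_mulVec]
  set K := Nat.find hex with hK
  have hKspec : Jp n ^ K *ᵥ v = 0 := Nat.find_spec hex
  have hKpos : 1 ≤ K := by
    rcases Nat.eq_zero_or_pos K with h0 | h1
    · exfalso
      apply hv
      have := hKspec
      rw [h0, pow_zero, Matrix.one_mulVec] at this
      exact this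
    · exact h1
  have hKm1 : Jp n ^ (K - 1) *ᵥ v ≠ 0 := Nat.find_min hex (by omega)
  set w := Jp n ^ (K - 1) *ᵥ v with hw
  have hcomm : Jsq n * Jp n ^ (K - 1) = Jp n ^ (K - 1) * Jsq n :=
    (Commute.pow_right (jsq_comm_p n) (K - 1))
  have hJsqw : Jsq n *ᵥ w = μ • w := by
    rw [hw, Matrix.mulVec_mulVec, hcomm, ← Matrix.mulVec_mulVec, hev, Matrix.mulVec_smul]
  have hJpw : Jp n *ᵥ w = 0 := by
    rw [hw, Matrix.mulVec_mulVec, ← pow_succ']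
    have : K - 1 + 1 = K := by omega
    rw [this, hKspec]
  -- w is an eigenvector of the diagonal matrix Jz² + Jz
  have hdiag : Matrix.diagonal (fun i => ((wt i : ℂ) / 2) ^ 2 + (wt i : ℂ) / 2) *ᵥ w
      = μ • w := by
    have h1 : Jsq n *ᵥ w = Jz n ^ 2 *ᵥ w + Jz n *ᵥ w + Jm n *ᵥ (Jp n *ᵥ w) := by
      rw [jsq_eq n, Matrix.add_mulVec, Matrix.add_mulVec, ← Matrix.mulVec_mulVec]
    rw [hJpw, Matrix.mulVec_zero, add_zero] at h1
    have h2 : Jz n ^ 2 + Jz n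
        = Matrix.diagonal (fun i => ((wt i : ℂ) / 2) ^ 2 + (wt i : ℂ) / 2) := by
      rw [Jz_diagonal, sq, Matrix.diagonal_mul_diagonal, Matrix.diagonal_add]
      apply congrArg Matrix.diagonal
      funext i
      ring
    rw [h2.symm, Matrix.add_mulVec, ← h1, hJsqw]
  obtain ⟨i, hwi0, hdμ⟩ := diagonal_eig _ hKm1 hdiag
  set W : ℤ := wt i with hWdef
  have hμW : μ = ((W : ℂ) / 2) ^ 2 + (W : ℂ) / 2 := hdμ.symm
  -- μ is a nonnegative real
  set creal : ℝ := ((W : ℝ) / 2) ^ 2 + (W : ℝ) / 2 with hcreal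
  have hμc : μ = (creal : ℂ) := by rw [hμW, hcreal]; push_cast; ring
  have hc0 : 0 ≤ creal := eig_real_nonneg n hKm1 (by rw [← hμc]; exact hJsqw)
  have hWle : W ≤ n := wt_le i
  have hWge : -(n : ℤ) ≤ W := neg_le_wt i
  have hWpar : (2 : ℤ) ∣ (W - n) := wt_parity i
  by_cases hWpos : 0 ≤ W
  · refine ⟨W.toNat, by omega, by omega, ?_⟩
    have : ((W.toNat : ℤ) : ℂ) = (W : ℂ) := by
      norm_cast
      omega
    push_cast at this ⊢
    rw [this, hμW]
  · push_neg at hWpos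
    have hWne1 : W ≠ -1 := by
      intro h1
      rw [hcreal, h1] at hc0
      norm_num at hc0
    have hWle2 : W ≤ -2 := by omega
    refine ⟨(-W - 2).toNat, by omega, by omega, ?_⟩
    have : (((-W - 2).toNat : ℤ) : ℂ) = ((-W - 2 : ℤ) : ℂ) := by
      norm_cast
      omega
    push_cast at this ⊢
    rw [this, hμW]
    push_cast
    ring

/-! ### Lower bound: explicit highest-weight eigenvectors -/

/-- Extension of a basis index to all of `ℕ`. -/
def ext' {n : ℕ} (i : Fin n → Fin 2) : ℕ → Fin 2 := fun a => if h : a < n then i ⟨a, h⟩ else 0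

/-- Singlet coefficient function. -/
noncomputable def sgl : Fin 2 → Fin 2 → ℂ := fun a b =>
  if a = 0 ∧ b = 1 then 1 else if a = 1 ∧ b = 0 then -1 else 0

/-- Spin-up coefficient function. -/
noncomputable def upf : Fin 2 → ℂ := fun a => if a = 0 then 1 else 0

/-- The coefficient vector of `singlet^{⊗p} ⊗ up^{⊗m}`. -/
noncomputable def hwv (n p m : ℕ) : (Fin n → Fin 2) → ℂ := fun i =>
  (∏ t ∈ Finset.range p, sgl (ext' i (2*t)) (ext' i (2*t+1))) *
  (∏ r ∈ Finset.range m, upf (ext' i (2*p + r)))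

lemma ext'_update {n : ℕ} (i : Fin n → Fin 2) (k : Fin n) (a : Fin 2) :
    ext' (Function.update i k a) = Function.update (ext' i) k.val a := by
  funext b
  by_cases hb : b < n
  · rw [ext', dif_pos hb]
    by_cases hbk : b = k.val
    · have : (⟨b, hb⟩ : Fin n) = k := Fin.ext hbk
      rw [this, Function.update_self, hbk, Function.update_self]
    · have : (⟨b, hb⟩ : Fin n) ≠ k := fun h => hbk (by rw [← h])
      rw [Function.update_of_ne this, Function.update_of_ne hbk, ext', dif_pos hb]
  · have hbk : b ≠ k.val := by have := k.isLt; omega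
    rw [ext', dif_neg hb, Function.update_of_ne hbk, ext', dif_neg hb]

lemma ext'_eq {n : ℕ} (i : Fin n → Fin 2) (k : Fin n) : ext' i k.val = i k := by
  rw [ext', dif_pos k.isLt]

lemma sum_range_two_mul {M : Type*} [AddCommMonoid M] (p : ℕ) (f : ℕ → M) :
    ∑ a ∈ Finset.range (2*p), f a = ∑ t ∈ Finset.range p, (f (2*t) + f (2*t+1)) := by
  induction p with
  | zero => simp
  | succ p ih =>
    have : 2 * (p + 1) = (2*p) + 1 + 1 := by ring
    rw [this, Finset.sum_range_succ, Finset.sum_range_succ, ih, Finset.sum_range_succ]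
    abel

lemma sgl_ne_zero {a b : Fin 2} (h : sgl a b ≠ 0) :
    (a = 0 ∧ b = 1) ∨ (a = 1 ∧ b = 0) := by
  by_contra hc
  push_neg at hc
  apply h
  rw [sgl]
  have h0 : a = 0 ∨ a = 1 := by omega
  have h1 : b = 0 ∨ b = 1 := by omega
  rcases h0 with h' | h' <;> rcases h1 with h'' | h'' <;> subst h' <;> subst h'' <;>
    simp_all

lemma upf_ne_zero {a : Fin 2} (h : upf a ≠ 0) : a = 0 := by
  by_contra hc
  exact h (by rw [upf, if_neg hc])

lemma hwv_wt {n p m : ℕ} (hpm : 2*p + m = n) {i : Fin n → Fin 2}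
    (h : hwv n p m i ≠ 0) : wt i = m := by
  rw [hwv] at h
  have hs := mul_ne_zero_iff.mp h
  have hsgl := Finset.prod_ne_zero_iff.mp hs.1
  have hupf := Finset.prod_ne_zero_iff.mp hs.2
  have hwt : wt i = ∑ a ∈ Finset.range n, (if ext' i a = 0 then (1:ℤ) else -1) := by
    rw [wt, ← Fin.sum_univ_eq_sum_range (fun a => if ext' i a = 0 then (1:ℤ) else -1) n]
    exact Finset.sum_congr rfl (fun k _ => by rw [ext'_eq])
  have key : wt i = ∑ a ∈ Finset.range (2*p), (if ext' i a = 0 then (1:ℤ) else -1)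
      + ∑ r ∈ Finset.range m, (if ext' i (2*p + r) = 0 then (1:ℤ) else -1) := by
    rw [hwt, ← Finset.sum_range_add, hpm]
  rw [key, sum_range_two_mul]
  have hz : ∀ t ∈ Finset.range p,
      ((if ext' i (2*t) = 0 then (1:ℤ) else -1) + (if ext' i (2*t+1) = 0 then 1 else -1)) = 0 := by
    intro t ht
    rcases sgl_ne_zero (hsgl t ht) with ⟨h1, h2⟩ | ⟨h1, h2⟩ <;> rw [h1, h2] <;> simp
  have ho : ∀ r ∈ Finset.range m,
      (if ext' i (2*p + r) = 0 then (1:ℤ) else -1) = 1 := by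
    intro r hr
    rw [upf_ne_zero (hupf r hr)]
    simp
  rw [Finset.sum_congr rfl hz, Finset.sum_congr rfl ho]
  simp

lemma hwv_ne_zero {n p m : ℕ} (hpm : 2*p + m = n) : hwv n p m ≠ 0 := by
  intro hz
  set i₀ : Fin n → Fin 2 := fun k => if k.val % 2 = 1 ∧ k.val < 2*p then 1 else 0 with hi₀
  have hext : ∀ a, a < n → ext' i₀ a = if a % 2 = 1 ∧ a < 2*p then 1 else 0 := by
    intro a ha
    rw [ext', dif_pos ha, hi₀]
  have h1 : hwv n p m i₀ = 1 := by
    rw [hwv]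
    have hp1 : ∀ t ∈ Finset.range p, sgl (ext' i₀ (2*t)) (ext' i₀ (2*t+1)) = 1 := by
      intro t ht
      rw [Finset.mem_range] at ht
      rw [hext (2*t) (by omega), hext (2*t+1) (by omega), if_neg (by omega),
        if_pos (by constructor <;> omega)]
      rw [sgl]
      norm_num
    have hp2 : ∀ r ∈ Finset.range m, upf (ext' i₀ (2*p + r)) = 1 := by
      intro r hr
      rw [Finset.mem_range] at hr
      rw [hext (2*p + r) (by omega), if_neg (by omega), upf]
      norm_num
    rw [Finset.prod_congr rfl hp1, Finset.prod_congr rfl hp2]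
    simp
  rw [congrFun hz i₀] at h1
  exact one_ne_zero h1.symm

lemma hwv_Jz {n p m : ℕ} (hpm : 2*p + m = n) :
    Jz n *ᵥ hwv n p m = ((m : ℂ)/2) • hwv n p m := by
  funext i
  rw [Jz_diagonal, Matrix.mulVec_diagonal, Pi.smul_apply, smul_eq_mul]
  by_cases h : hwv n p m i = 0
  · rw [h, mul_zero, mul_zero]
  · rw [hwv_wt hpm h]
    push_cast
    ring

lemma sigmaP_apply_zero (a : Fin 2) : sigmaP a 0 = 0 := by
  fin_cases a <;> simp [sigmaP]

lemma sigmaP_apply_one (a : Fin 2) : sigmaP a 1 = if a = 0 then 1 else 0 := by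
  fin_cases a <;> simp [sigmaP]

lemma sum_mulVec' {N K : Type*} [Fintype N] [Fintype K] (A : K → Matrix N N ℂ) (v : N → ℂ) :
    (∑ k, A k) *ᵥ v = ∑ k, A k *ᵥ v := by
  funext i
  simp only [Matrix.mulVec, dotProduct, Finset.sum_apply, Matrix.sum_apply,
    Finset.sum_mul]
  rw [Finset.sum_comm]

lemma pair_cancel (a b : Fin 2) :
    (if a = 0 then (1:ℂ) else 0) * sgl 1 b + (if b = 0 then (1:ℂ) else 0) * sgl a 1 = 0 := by
  fin_cases a <;> fin_cases b <;> norm_num [sgl]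

lemma hwv_Jp {n p m : ℕ} (hpm : 2*p + m = n) : Jp n *ᵥ hwv n p m = 0 := by
  funext i
  show (Jp n *ᵥ hwv n p m) i = (0 : ℂ)
  rw [Jp_eq_sumslot, sum_mulVec', Finset.sum_apply]
  have hterm : ∀ k : Fin n, (slot n sigmaP k *ᵥ hwv n p m) i
      = (if i k = 0 then (1:ℂ) else 0) * hwv n p m (Function.update i k 1) := by
    intro k
    rw [slot_mulVec, sigmaP_apply_zero, sigmaP_apply_one, zero_mul, zero_add]
  rw [Finset.sum_congr rfl (fun k _ => hterm k)]
  set T : ℕ → ℂ := fun a => if h : a < n then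
      (if i ⟨a, h⟩ = 0 then (1:ℂ) else 0) * hwv n p m (Function.update i ⟨a, h⟩ 1) else 0
    with hT
  have hre : ∑ k : Fin n, (if i k = 0 then (1:ℂ) else 0) * hwv n p m (Function.update i k 1)
      = ∑ a ∈ Finset.range n, T a := by
    rw [← Fin.sum_univ_eq_sum_range T n]
    apply Finset.sum_congr rfl
    intro k _
    rw [hT]
    simp only [Fin.eta, Fin.is_lt, dif_pos]
  have hsplit : ∑ a ∈ Finset.range (2*p), T a + ∑ r ∈ Finset.range m, T (2*p + r)
      = ∑ a ∈ Finset.range n, T a := by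
    rw [← Finset.sum_range_add, hpm]
  have hup : ∀ r ∈ Finset.range m, T (2*p + r) = 0 := by
    intro r hr
    rw [Finset.mem_range] at hr
    have hlt : 2*p + r < n := by omega
    rw [hT]
    simp only []
    rw [dif_pos hlt]
    have hzero : hwv n p m (Function.update i ⟨2*p+r, hlt⟩ 1) = 0 := by
      rw [hwv]
      apply mul_eq_zero_of_right
      apply Finset.prod_eq_zero (Finset.mem_range.mpr hr)
      rw [ext'_update]
      have : Function.update (ext' i) ((⟨2*p+r, hlt⟩ : Fin n) : ℕ) 1 (2*p + r) = 1 :=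
        Function.update_self _ _ _
      rw [this, upf]
      norm_num
    rw [hzero, mul_zero]
  have hpair : ∀ t ∈ Finset.range p, T (2*t) + T (2*t + 1) = 0 := by
    intro t ht
    rw [Finset.mem_range] at ht
    have h0 : 2*t < n := by omega
    have h1 : 2*t + 1 < n := by omega
    set R : ℂ := (∏ t' ∈ (Finset.range p).erase t, sgl (ext' i (2*t')) (ext' i (2*t'+1)))
        * ∏ r ∈ Finset.range m, upf (ext' i (2*p + r)) with hR
    have hv0 : hwv n p m (Function.update i ⟨2*t, h0⟩ 1) = sgl 1 (ext' i (2*t+1)) * R := by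
      rw [hwv, ext'_update]
      rw [← Finset.mul_prod_erase _ _ (Finset.mem_range.mpr ht)]
      have eA : Function.update (ext' i) ((⟨2*t, h0⟩ : Fin n) : ℕ) 1 (2*t) = 1 :=
        Function.update_self _ _ _
      have eB : Function.update (ext' i) ((⟨2*t, h0⟩ : Fin n) : ℕ) 1 (2*t+1)
          = ext' i (2*t+1) := Function.update_of_ne (by simp only [Fin.val_mk]; omega) _ _
      have eC : ∀ t' ∈ (Finset.range p).erase t,
          sgl (Function.update (ext' i) ((⟨2*t, h0⟩ : Fin n) : ℕ) 1 (2*t'))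
            (Function.update (ext' i) ((⟨2*t, h0⟩ : Fin n) : ℕ) 1 (2*t'+1))
          = sgl (ext' i (2*t')) (ext' i (2*t'+1)) := by
        intro t' ht'
        have hne : t' ≠ t := Finset.ne_of_mem_erase ht'
        rw [Function.update_of_ne (by simp only [Fin.val_mk]; omega), Function.update_of_ne (by simp only [Fin.val_mk]; omega)]
      have eD : ∀ r ∈ Finset.range m,
          upf (Function.update (ext' i) ((⟨2*t, h0⟩ : Fin n) : ℕ) 1 (2*p+r))
          = upf (ext' i (2*p+r)) := by
        intro r hr
        rw [Function.update_of_ne (by simp only [Fin.val_mk]; omega)]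
      rw [eA, eB, Finset.prod_congr rfl eC, Finset.prod_congr rfl eD, hR]
      ring
    have hv1 : hwv n p m (Function.update i ⟨2*t+1, h1⟩ 1) = sgl (ext' i (2*t)) 1 * R := by
      rw [hwv, ext'_update]
      rw [← Finset.mul_prod_erase _ _ (Finset.mem_range.mpr ht)]
      have eA : Function.update (ext' i) ((⟨2*t+1, h1⟩ : Fin n) : ℕ) 1 (2*t)
          = ext' i (2*t) := Function.update_of_ne (by simp only [Fin.val_mk]; omega) _ _
      have eB : Function.update (ext' i) ((⟨2*t+1, h1⟩ : Fin n) : ℕ) 1 (2*t+1) = 1 :=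
        Function.update_self _ _ _
      have eC : ∀ t' ∈ (Finset.range p).erase t,
          sgl (Function.update (ext' i) ((⟨2*t+1, h1⟩ : Fin n) : ℕ) 1 (2*t'))
            (Function.update (ext' i) ((⟨2*t+1, h1⟩ : Fin n) : ℕ) 1 (2*t'+1))
          = sgl (ext' i (2*t')) (ext' i (2*t'+1)) := by
        intro t' ht'
        have hne : t' ≠ t := Finset.ne_of_mem_erase ht'
        rw [Function.update_of_ne (by simp only [Fin.val_mk]; omega), Function.update_of_ne (by simp only [Fin.val_mk]; omega)]
      have eD : ∀ r ∈ Finset.range m,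
          upf (Function.update (ext' i) ((⟨2*t+1, h1⟩ : Fin n) : ℕ) 1 (2*p+r))
          = upf (ext' i (2*p+r)) := by
        intro r hr
        rw [Function.update_of_ne (by simp only [Fin.val_mk]; omega)]
      rw [eA, eB, Finset.prod_congr rfl eC, Finset.prod_congr rfl eD, hR]
      ring
    have hx₀ : i ⟨2*t, h0⟩ = ext' i (2*t) := by rw [ext', dif_pos h0]
    have hx₁ : i ⟨2*t+1, h1⟩ = ext' i (2*t+1) := by rw [ext', dif_pos h1]
    rw [hT]
    simp only []
    rw [dif_pos h0, dif_pos h1, hv0, hv1, hx₀, hx₁]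
    linear_combination R * pair_cancel (ext' i (2*t)) (ext' i (2*t+1))
  rw [hre, ← hsplit, sum_range_two_mul, Finset.sum_congr rfl hpair, Finset.sum_congr rfl hup]
  simp

lemma hwv_Jsq {n p m : ℕ} (hpm : 2*p + m = n) :
    Jsq n *ᵥ hwv n p m = (((m : ℂ)/2) ^ 2 + (m : ℂ)/2) • hwv n p m := by
  have h1 : (Jm n * Jp n) *ᵥ hwv n p m = 0 := by
    rw [← Matrix.mulVec_mulVec, hwv_Jp hpm, Matrix.mulVec_zero]
  have h2 : (Jz n ^ 2) *ᵥ hwv n p m = (((m : ℂ)/2) ^ 2) • hwv n p m := by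
    rw [sq, ← Matrix.mulVec_mulVec, hwv_Jz hpm, Matrix.mulVec_smul, hwv_Jz hpm, smul_smul, ← sq]
  rw [jsq_eq n, Matrix.add_mulVec, Matrix.add_mulVec, h1, h2, hwv_Jz hpm, add_zero, ← add_smul]

/-- The spectrum of `J²` is `{ j² + j : j ∈ 𝒥_n }`. -/theorem jsq_spectrum (n : ℕ) (hn : 1 ≤ n) :
    spectrum ℂ (Jsq n) = {z : ℂ | ∃ j : ℝ, j ∈ Jset n ∧ z = (j : ℂ) ^ 2 + j} := by
  ext μ
  simp only [Set.mem_setOf_eq]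
  constructor
  · intro hμ
    obtain ⟨m, hm, hpar, hval⟩ := jsq_spectrum_subset n hμ
    refine ⟨(m : ℝ)/2, ⟨m, hm, hpar, rfl⟩, ?_⟩
    rw [hval]
    push_cast
    ring
  · rintro ⟨j, ⟨m, hm, hpar, rfl⟩, rfl⟩
    have hpm : 2 * ((n - m)/2) + m = n := by omega
    rw [mem_spectrum_iff_exists]
    refine ⟨hwv n ((n-m)/2) m, hwv_ne_zero hpm, ?_⟩
    rw [hwv_Jsq hpm]
    congr 1
    push_cast
    ring
end

section
/- Let θ_x, θ_y, θ_z be real numbers with 0 < θ_w < 2π/n for each w ∈ {x,y,z}, and set E_w = (1/√3)·exp(i θ_w J_w), where exp denotes the matrix exponential. Then a matrix ρ ∈ M_{2ⁿ}(ℂ) satisfies E_x ρ E_x† + E_y ρ E_y† + E_z ρ E_z† = ρ if and only if ρ commutes with each of J_x, J_y, J_z; that is, Fix(ℰ_n) = 𝒜_n′ = {J_x, J_y, J_z}′. -/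
open Matrix Complex

/-!
Each `E_w` is `3^{-1/2}` times the unitary `U_w = exp(i θ_w J_w)`, so the channel is the average
of three unitary conjugations. Such an average fixes `ρ` only if every conjugation does, since
`∑_w ‖U_w ρ U_w† - ρ‖₂²` expands to zero. Then `ρ` commutes with each `U_w`, and from there with
`J_w`: each `J_w` is conjugate, through a Kronecker power of a 2×2 matrix, to the diagonal
`J_z`, whose eigenvalues `n/2 - s` (`0 ≤ s ≤ n`) differ by integers of size at most `n`. As
`θ_w < 2π/n`, `x ↦ exp(i θ_w x)` separates them, so a matrix commuting with `exp(i θ_w J_w)`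
preserves its eigenspaces, i.e. commutes with `J_w`.
-/

section PiKronecker

variable {ι α R : Type*} [Fintype ι] [CommSemiring R]

def piKronecker (M : ι → Matrix α α R) : Matrix (ι → α) (ι → α) R :=
  of fun i j => ∏ l, M l (i l) (j l)

theorem piKronecker_mul [DecidableEq ι] [Fintype α] (M N : ι → Matrix α α R) :
    piKronecker M * piKronecker N = piKronecker fun l => M l * N l := by
  ext i j
  simp only [piKronecker, mul_apply, of_apply, ← Finset.prod_mul_distrib]
  rw [Finset.prod_univ_sum, Fintype.piFinset_univ]

theorem piKronecker_one [DecidableEq α] : piKronecker (fun _ : ι => (1 : Matrix α α R)) = 1 := by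
  ext i j
  simp only [piKronecker, of_apply]
  by_cases h : i = j
  · subst h; simp
  · obtain ⟨l, hl⟩ := Function.ne_iff.mp h
    rw [one_apply_ne h]
    exact Finset.prod_eq_zero (Finset.mem_univ l) (one_apply_ne hl)

theorem piKronecker_diagonal [DecidableEq α] (d : ι → α → R) :
    piKronecker (fun l => diagonal (d l)) = diagonal fun i => ∏ l, d l (i l) := by
  ext i j
  simp only [piKronecker, of_apply]
  by_cases h : i = j
  · subst h; simp
  · obtain ⟨l, hl⟩ := Function.ne_iff.mp h
    rw [diagonal_apply_ne _ h]
    exact Finset.prod_eq_zero (Finset.mem_univ l) (diagonal_apply_ne _ hl)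

theorem piKronecker_conjTranspose [StarRing R] (M : ι → Matrix α α R) :
    (piKronecker M)ᴴ = piKronecker fun l => (M l)ᴴ := by
  ext i j
  simp [piKronecker, star_prod]

variable (ι) in
def kroneckerPow [DecidableEq ι] [Fintype α] [DecidableEq α] :
    Matrix α α R →* Matrix (ι → α) (ι → α) R where
  toFun V := piKronecker fun _ => V
  map_one' := piKronecker_one
  map_mul' _ _ := (piKronecker_mul _ _).symm

end PiKronecker

theorem commute_units_conj_iff {M : Type*} [Monoid M] (u : Mˣ) (a b : M) :
    Commute a (u * b * ↑u⁻¹) ↔ Commute (↑u⁻¹ * a * u) b := by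
  constructor
  · intro h
    calc ↑u⁻¹ * a * u * b = ↑u⁻¹ * (a * (u * b * ↑u⁻¹)) * u := by simp [mul_assoc]
      _ = ↑u⁻¹ * ((u * b * ↑u⁻¹) * a) * u := by rw [h.eq]
      _ = b * (↑u⁻¹ * a * u) := by simp [mul_assoc]
  · intro h
    calc a * (u * b * ↑u⁻¹) = u * ((↑u⁻¹ * a * u) * b) * ↑u⁻¹ := by simp [mul_assoc]
      _ = u * (b * (↑u⁻¹ * a * u)) * ↑u⁻¹ := by rw [h.eq]
      _ = u * b * ↑u⁻¹ * a := by simp [mul_assoc]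

theorem Commute.diagonal_of_diagonal {m R : Type*} [DecidableEq m] [Fintype m] [CommRing R]
    [NoZeroDivisors R] {d e : m → R} (hde : ∀ i j, e i = e j → d i = d j) {σ : Matrix m m R}
    (h : Commute σ (diagonal e)) : Commute σ (diagonal d) := by
  ext i j
  have hij : σ i j * e j = e i * σ i j := by simpa using congrFun (congrFun h.eq i) j
  simp only [mul_diagonal, diagonal_mul]
  rcases mul_eq_zero.mp (show σ i j * (e j - e i) = 0 by rw [mul_sub, hij, mul_comm, sub_self])
    with hσ | he
  · simp [hσ]
  · rw [hde j i (sub_eq_zero.mp he), mul_comm]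

theorem Commute.of_exp_smul_units_conj_diagonal {m : Type*} [Fintype m] [DecidableEq m]
    (u : (Matrix m m ℂ)ˣ) {d : m → ℂ} {c : ℂ}
    (hd : ∀ i j, cexp (c * d i) = cexp (c * d j) → d i = d j) {ρ : Matrix m m ℂ}
    (h : Commute ρ (NormedSpace.exp (c • (u.val * diagonal d * u⁻¹.val)))) :
    Commute ρ (u.val * diagonal d * u⁻¹.val) := by
  have hexp : NormedSpace.exp (c • (u.val * diagonal d * u⁻¹.val)) =
      u.val * diagonal (fun i => cexp (c * d i)) * u⁻¹.val := by
    rw [← smul_mul_assoc, ← mul_smul_comm, ← diagonal_smul, Matrix.exp_units_conj, exp_diagonal]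
    simp [Pi.exp_def, Complex.exp_eq_exp_ℂ]
  rw [hexp, commute_units_conj_iff] at h
  exact (commute_units_conj_iff u _ _).mpr (h.diagonal_of_diagonal hd)

theorem smul_mul_mul_conjTranspose_smul {m R : Type*} [Fintype m] [CommSemiring R] [StarRing R]
    (c : R) (U ρ : Matrix m m R) : (c • U) * ρ * (c • U)ᴴ = (c * star c) • (U * ρ * Uᴴ) := by
  rw [conjTranspose_smul, Matrix.smul_mul, Matrix.smul_mul, Matrix.mul_smul, smul_smul]

section Rigidity

open scoped ComplexOrder

variable {m 𝕜 : Type*} [Fintype m] [DecidableEq m] [RCLike 𝕜]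

theorem conj_eq_self_iff_commute {U : Matrix m m 𝕜} (hU : U ∈ unitaryGroup m 𝕜)
    (ρ : Matrix m m 𝕜) : U * ρ * Uᴴ = ρ ↔ Commute ρ U := by
  have hUU : Uᴴ * U = 1 := mem_unitaryGroup_iff'.mp hU
  have hUU' : U * Uᴴ = 1 := mem_unitaryGroup_iff.mp hU
  constructor
  · intro h
    calc ρ * U = U * ρ * Uᴴ * U := by rw [h]
      _ = U * ρ := by rw [Matrix.mul_assoc _ Uᴴ, hUU, Matrix.mul_one]
  · intro h
    rw [← h.eq, Matrix.mul_assoc, hUU', Matrix.mul_one]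

theorem trace_conjTranspose_mul_self_unitary_conj {U : Matrix m m 𝕜} (hU : U ∈ unitaryGroup m 𝕜)
    (ρ : Matrix m m 𝕜) : trace ((U * ρ * Uᴴ)ᴴ * (U * ρ * Uᴴ)) = trace (ρᴴ * ρ) := by
  have hUU : Uᴴ * U = 1 := mem_unitaryGroup_iff'.mp hU
  calc trace ((U * ρ * Uᴴ)ᴴ * (U * ρ * Uᴴ)) = trace (U * (ρᴴ * (Uᴴ * U) * ρ) * Uᴴ) := by
        simp only [conjTranspose_mul, conjTranspose_conjTranspose, Matrix.mul_assoc]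
    _ = trace (Uᴴ * U * (ρᴴ * (Uᴴ * U) * ρ)) := trace_mul_cycle _ _ _
    _ = trace (ρᴴ * ρ) := by rw [hUU, Matrix.one_mul, Matrix.mul_one]

theorem conj_eq_self_of_sum_conj_eq_card_nsmul {ι : Type*} [Fintype ι] {U : ι → Matrix m m 𝕜}
    (hU : ∀ i, U i ∈ unitaryGroup m 𝕜) {ρ : Matrix m m 𝕜}
    (h : ∑ i, U i * ρ * (U i)ᴴ = Fintype.card ι • ρ) (i : ι) : U i * ρ * (U i)ᴴ = ρ := by
  set A : ι → Matrix m m 𝕜 := fun i => U i * ρ * (U i)ᴴ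
  have hA : ∑ i, trace ((A i)ᴴ * ρ) = Fintype.card ι • trace (ρᴴ * ρ) := by
    rw [← trace_sum, ← Matrix.sum_mul, ← conjTranspose_sum, h, conjTranspose_nsmul,
      Matrix.smul_mul, trace_smul]
  have hA' : ∑ i, trace (ρᴴ * A i) = Fintype.card ι • trace (ρᴴ * ρ) := by
    rw [← trace_sum, ← Matrix.mul_sum, h, Matrix.mul_smul, trace_smul]
  have hsum : ∑ i, trace ((A i - ρ)ᴴ * (A i - ρ)) = 0 := by
    simp only [conjTranspose_sub, Matrix.sub_mul, Matrix.mul_sub, trace_sub, Finset.sum_sub_distrib,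
      A, trace_conjTranspose_mul_self_unitary_conj (hU _)] at hA hA' ⊢
    rw [hA, hA', Finset.sum_const, Finset.card_univ]
    abel
  have hzero := (Finset.sum_eq_zero_iff_of_nonneg fun i _ =>
    (posSemidef_conjTranspose_mul_self (A i - ρ)).trace_nonneg).mp hsum i (Finset.mem_univ i)
  exact sub_eq_zero.mp (trace_conjTranspose_mul_self_eq_zero_iff.mp hzero)

theorem sum_conj_eq_card_nsmul_iff_forall_commute {ι : Type*} [Fintype ι]
    {U : ι → Matrix m m 𝕜} (hU : ∀ i, U i ∈ unitaryGroup m 𝕜) (ρ : Matrix m m 𝕜) :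
    ∑ i, U i * ρ * (U i)ᴴ = Fintype.card ι • ρ ↔ ∀ i, Commute ρ (U i) := by
  simp only [← conj_eq_self_iff_commute (hU _)]
  refine ⟨conj_eq_self_of_sum_conj_eq_card_nsmul hU, fun h => ?_⟩
  simp [h]

end Rigidity

theorem exp_I_smul_mem_unitaryGroup {m : Type*} [Fintype m] [DecidableEq m]
    {J : Matrix m m ℂ} (hJ : J.IsHermitian) (θ : ℝ) :
    NormedSpace.exp ((I * θ) • J) ∈ unitaryGroup m ℂ := by
  have hskew : ((I * θ) • J)ᴴ = -((I * θ) • J) := by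
    rw [conjTranspose_smul, hJ.eq, ← neg_smul]
    simp
  rw [mem_unitaryGroup_iff, star_eq_conjTranspose, ← Matrix.exp_conjTranspose, hskew,
    ← Matrix.exp_add_of_commute _ _ (Commute.refl ((I * θ) • J)).neg_right, add_neg_cancel,
    NormedSpace.exp_zero]

theorem int_eq_zero_of_cexp_mul_I_eq_one {θ : ℝ} {t : ℤ} (hθ : 0 < θ)
    (ht : |(t : ℝ)| * θ < 2 * Real.pi) (h : cexp (t * θ * I) = 1) : t = 0 := by
  obtain ⟨k, hk⟩ := Complex.exp_eq_one_iff.mp h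
  have hreal : (t : ℝ) * θ = k * (2 * Real.pi) := by
    simpa using congrArg Complex.im hk
  have habs : |(t : ℝ)| * θ = |(k : ℝ)| * (2 * Real.pi) := by
    simpa [abs_mul, abs_of_pos hθ, abs_of_pos Real.pi_pos] using congrArg abs hreal
  have hk0 : k = 0 := by
    have : |(k : ℝ)| < 1 := by nlinarith [Real.two_pi_pos]
    exact Int.abs_lt_one_iff.mp (by exact_mod_cast this)
  rw [hk0, Int.cast_zero, zero_mul] at hreal
  exact_mod_cast (mul_eq_zero.mp hreal).resolve_right hθ.ne'

section Collective

variable (n : ℕ)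

theorem slot_eq_piKronecker (σ : Matrix (Fin 2) (Fin 2) ℂ) (k : Fin n) :
    slot n σ k = piKronecker (Pi.mulSingle k σ) := by
  ext i j
  rw [slot, piKronecker, of_apply, of_apply, ← Finset.mul_prod_erase _ _ (Finset.mem_univ k)]
  congr 1
  · simp
  · refine Finset.prod_congr rfl fun l hl => ?_
    simp [(Finset.mem_erase.mp hl).1, one_apply]

theorem slot_units_conj (v : (Matrix (Fin 2) (Fin 2) ℂ)ˣ) (σ : Matrix (Fin 2) (Fin 2) ℂ)
    (k : Fin n) :
    slot n (v.val * σ * v⁻¹.val) k =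
      (Units.map (kroneckerPow (Fin n)) v).val * slot n σ k *
        (Units.map (kroneckerPow (Fin n)) v)⁻¹.val := by
  simp only [slot_eq_piKronecker, Units.coe_map, Units.coe_map_inv, kroneckerPow, MonoidHom.coe_mk,
    OneHom.coe_mk, piKronecker_mul]
  congr 1
  funext l
  by_cases h : l = k
  · subst h; simp
  · simp [h]

theorem sum_slot_units_conj (v : (Matrix (Fin 2) (Fin 2) ℂ)ˣ) (σ : Matrix (Fin 2) (Fin 2) ℂ) :
    ∑ k, slot n (v.val * σ * v⁻¹.val) k =
      (Units.map (kroneckerPow (Fin n)) v).val * (∑ k, slot n σ k) *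
        (Units.map (kroneckerPow (Fin n)) v)⁻¹.val := by
  simp only [Finset.mul_sum, Finset.sum_mul, slot_units_conj]

theorem isHermitian_sum_slot {σ : Matrix (Fin 2) (Fin 2) ℂ} (hσ : σ.IsHermitian) :
    (∑ k, slot n σ k).IsHermitian := by
  refine (conjTranspose_sum _ _).trans (Finset.sum_congr rfl fun k _ => ?_)
  rw [slot_eq_piKronecker, piKronecker_conjTranspose]
  congr 1
  funext l
  by_cases h : l = k
  · subst h; simpa using hσ.eq
  · simp [h]

theorem slot_diagonal (e : Fin 2 → ℂ) (k : Fin n) :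
    slot n (diagonal e) k = diagonal fun i => e (i k) := by
  have : Pi.mulSingle k (diagonal e) =
      fun l => diagonal ((Pi.mulSingle k e : Fin n → Fin 2 → ℂ) l) := by
    funext l
    by_cases h : l = k
    · subst h; simp
    · simp [h]
  rw [slot_eq_piKronecker, this, piKronecker_diagonal]
  congr 1
  funext i
  rw [Finset.prod_eq_single k (fun l _ hl => by simp [hl]) (by simp)]
  simp

end Collective

theorem pauliZ_eq_diagonal : pauliZ = diagonal fun a : Fin 2 => 1 / 2 - ((a : ℕ) : ℂ) := by
  ext a b
  fin_cases a <;> fin_cases b <;> norm_num [pauliZ]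

theorem isConj_pauliZ_pauliX : IsConj pauliZ pauliX := by
  refine ⟨⟨!![1, 1; 1, -1], (1 / 2 : ℂ) • !![1, 1; 1, -1], ?_, ?_⟩, ?_⟩ <;>
    ext i j <;> fin_cases i <;> fin_cases j <;> norm_num [SemiconjBy, pauliX, pauliZ]

theorem isConj_pauliZ_pauliY : IsConj pauliZ pauliY := by
  refine ⟨⟨!![1, 1; I, -I], (1 / 2 : ℂ) • !![1, -I; 1, I], ?_, ?_⟩, ?_⟩ <;>
    ext i j <;> fin_cases i <;> fin_cases j <;> norm_num [SemiconjBy, pauliY, pauliZ] <;>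
    ring_nf <;> norm_num

theorem pauliX_isHermitian : pauliX.IsHermitian := by
  ext i j; fin_cases i <;> fin_cases j <;> simp [pauliX]

theorem pauliY_isHermitian : pauliY.IsHermitian := by
  ext i j; fin_cases i <;> fin_cases j <;> simp [pauliY]

theorem pauliZ_isHermitian : pauliZ.IsHermitian := by
  ext i j; fin_cases i <;> fin_cases j <;> simp [pauliZ]

-- Index `0 : Fin 2` is spin up, so `∑ k, i k` counts the spins down in the basis state `i`.
noncomputable def jzEigenvalue (n : ℕ) (i : Fin n → Fin 2) : ℂ :=
  n / 2 - ((∑ k, (i k : ℕ) : ℕ) : ℂ)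

theorem Jz_eq_diagonal (n : ℕ) : Jz n = diagonal (jzEigenvalue n) := by
  ext i j
  simp only [Jz, pauliZ_eq_diagonal, slot_diagonal, Matrix.sum_apply, diagonal_apply, jzEigenvalue]
  split_ifs <;> simp [Finset.sum_sub_distrib, div_eq_mul_inv]

theorem jzEigenvalue_eq_of_cexp_eq {n : ℕ} {θ : ℝ} (hθ : 0 < θ) (hθn : θ < 2 * Real.pi / n)
    {i j : Fin n → Fin 2} (h : cexp (I * θ * jzEigenvalue n i) = cexp (I * θ * jzEigenvalue n j)) :
    jzEigenvalue n i = jzEigenvalue n j := by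
  have hle : ∀ i : Fin n → Fin 2, ∑ k, (i k : ℕ) ≤ n := fun i => by
    simpa using Finset.sum_le_card_nsmul Finset.univ _ 1 fun k _ => Nat.lt_succ_iff.mp (i k).isLt
  have hai := hle i
  have hbj := hle j
  simp only [jzEigenvalue] at h ⊢
  set a := ∑ k, (i k : ℕ)
  set b := ∑ k, (j k : ℕ)
  have hnθ : (n : ℝ) * θ < 2 * Real.pi := by
    rcases Nat.eq_zero_or_pos n with hn | hn
    · simpa [hn] using Real.pi_pos
    · exact (lt_div_iff₀' (by exact_mod_cast hn)).mp hθn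
  have hab : (b : ℤ) - a = 0 := by
    refine int_eq_zero_of_cexp_mul_I_eq_one hθ ?_ ?_
    · have : |(b : ℤ) - a| ≤ n := abs_sub_le_iff.mpr ⟨by omega, by omega⟩
      calc |(((b : ℤ) - a : ℤ) : ℝ)| * θ ≤ n * θ := by gcongr; exact_mod_cast this
        _ < 2 * Real.pi := hnθ
    · rw [show (((b : ℤ) - a : ℤ) : ℂ) * θ * I =
          I * θ * ((n : ℂ) / 2 - a) - I * θ * ((n : ℂ) / 2 - b) by push_cast; ring,
        Complex.exp_sub, h, div_self (Complex.exp_ne_zero _)]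
  rw [show a = b by omega]

theorem commute_exp_sum_slot_iff {n : ℕ} {σ : Matrix (Fin 2) (Fin 2) ℂ}
    (hσ : IsConj pauliZ σ) {θ : ℝ} (hθ : 0 < θ) (hθn : θ < 2 * Real.pi / n)
    (ρ : Matrix (Fin n → Fin 2) (Fin n → Fin 2) ℂ) :
    Commute ρ (NormedSpace.exp ((I * θ) • ∑ k, slot n σ k)) ↔ Commute ρ (∑ k, slot n σ k) := by
  refine ⟨fun h => ?_, fun h => (h.smul_right _).exp_right⟩
  obtain ⟨v, hv⟩ := hσ
  obtain rfl : σ = v.val * pauliZ * v⁻¹.val := (Units.eq_mul_inv_iff_mul_eq v).mpr hv.eq.symm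
  rw [sum_slot_units_conj, show ∑ k, slot n pauliZ k = Jz n from rfl, Jz_eq_diagonal] at h ⊢
  exact h.of_exp_smul_units_conj_diagonal _ fun i j => jzEigenvalue_eq_of_cexp_eq hθ hθn

theorem fixed_points_eq_commutant_general (n : ℕ)
    (θx θy θz : ℝ)
    (hθx : 0 < θx ∧ θx < 2 * Real.pi / n)
    (hθy : 0 < θy ∧ θy < 2 * Real.pi / n)
    (hθz : 0 < θz ∧ θz < 2 * Real.pi / n)
    (ρ : Matrix (Fin n → Fin 2) (Fin n → Fin 2) ℂ) :
    letI Ex := ((Real.sqrt 3 : ℂ))⁻¹ • NormedSpace.exp ((Complex.I * θx) • Jx n)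
    letI Ey := ((Real.sqrt 3 : ℂ))⁻¹ • NormedSpace.exp ((Complex.I * θy) • Jy n)
    letI Ez := ((Real.sqrt 3 : ℂ))⁻¹ • NormedSpace.exp ((Complex.I * θz) • Jz n)
    (Ex * ρ * Exᴴ + Ey * ρ * Eyᴴ + Ez * ρ * Ezᴴ = ρ ↔
      ρ * Jx n = Jx n * ρ ∧ ρ * Jy n = Jy n * ρ ∧ ρ * Jz n = Jz n * ρ) := by
  set U : Fin 3 → Matrix (Fin n → Fin 2) (Fin n → Fin 2) ℂ :=
    ![NormedSpace.exp ((I * θx) • Jx n), NormedSpace.exp ((I * θy) • Jy n),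
      NormedSpace.exp ((I * θz) • Jz n)]
  have hU : ∀ i, U i ∈ unitaryGroup _ ℂ := by
    intro i
    fin_cases i
    exacts [exp_I_smul_mem_unitaryGroup (isHermitian_sum_slot n pauliX_isHermitian) θx,
      exp_I_smul_mem_unitaryGroup (isHermitian_sum_slot n pauliY_isHermitian) θy,
      exp_I_smul_mem_unitaryGroup (isHermitian_sum_slot n pauliZ_isHermitian) θz]
  have hscale : ((Real.sqrt 3 : ℂ))⁻¹ * star ((Real.sqrt 3 : ℂ))⁻¹ = 3⁻¹ := by
    simp [← mul_inv, ← Complex.ofReal_mul]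
  have hchannel := sum_conj_eq_card_nsmul_iff_forall_commute hU ρ
  simp only [Fin.sum_univ_three, Fintype.card_fin, Fin.forall_fin_succ, IsEmpty.forall_iff,
    and_true, U, Matrix.cons_val, Fin.succ_zero_eq_one, Fin.succ_one_eq_two] at hchannel
  simp only [smul_mul_mul_conjTranspose_smul, hscale, ← smul_add]
  rw [inv_smul_eq_iff₀ three_ne_zero, ofNat_smul_eq_nsmul (R := ℂ), hchannel]
  exact and_congr (commute_exp_sum_slot_iff isConj_pauliZ_pauliX hθx.1 hθx.2 ρ)
    (and_congr (commute_exp_sum_slot_iff isConj_pauliZ_pauliY hθy.1 hθy.2 ρ)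
      (commute_exp_sum_slot_iff (IsConj.refl pauliZ) hθz.1 hθz.2 ρ))

/-- `Fix(ℰ_n) = 𝒜_n′ = {J_x, J_y, J_z}′`: for angles `0 < θ_w < 2π/n`, a matrix `ρ` is a
fixed point of the collective rotation channel `ℰ_n(ρ) = E_x ρ E_x† + E_y ρ E_y† + E_z ρ E_z†`,
with `E_w = (1/√3)·exp(i θ_w J_w)`, if and only if `ρ` commutes with each of `J_x, J_y, J_z`. -/
theorem fixed_points_eq_commutant (n : ℕ) (hn : 1 ≤ n)
    (θx θy θz : ℝ)
    (hθx : 0 < θx ∧ θx < 2 * Real.pi / n)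
    (hθy : 0 < θy ∧ θy < 2 * Real.pi / n)
    (hθz : 0 < θz ∧ θz < 2 * Real.pi / n)
    (ρ : Matrix (Fin n → Fin 2) (Fin n → Fin 2) ℂ) :
    letI Ex := ((Real.sqrt 3 : ℂ))⁻¹ • NormedSpace.exp ((Complex.I * θx) • Jx n)
    letI Ey := ((Real.sqrt 3 : ℂ))⁻¹ • NormedSpace.exp ((Complex.I * θy) • Jy n)
    letI Ez := ((Real.sqrt 3 : ℂ))⁻¹ • NormedSpace.exp ((Complex.I * θz) • Jz n)
    (Ex * ρ * Exᴴ + Ey * ρ * Eyᴴ + Ez * ρ * Ezᴴ = ρ ↔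
      ρ * Jx n = Jx n * ρ ∧ ρ * Jy n = Jy n * ρ ∧ ρ * Jz n = Jz n * ρ) :=
  fixed_points_eq_commutant_general n θx θy θz hθx hθy hθz ρ
end
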